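/- Let χ = (χ_0,…,χ_n) be a normalized divisive weight vector and fix 1 ≤ i ≤ n. For 0 ≤ j < i let J_{i,j} ∈ ℤ^n be the vector with entry 1 in position n−j, entry −χ_{n−j}/χ_{n−i} in position n−i when i < n, and all other entries 0 (for i = n, J_{n,j} is the standard basis vector e_{n−j}). Then for all 0 ≤ j < j' < i, the K-theoretic equivariant Euler classes 1 − α^{J_{i,j}} and 1 − α^{J_{i,j'}} are relatively prime in the Laurent polynomial ring S^±_ℤ(α) = ℤ[α_1^{±1},…,α_n^{±1}]. -/

import Mathlib

/-!
Let `r : ℤⁿ →+ ℤ` grade the Laurent ring `ℤ[ℤⁿ]`. In a product of nonzero elements the highest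
and lowest `r`-levels add, so the `r`-width of supports is additive; hence every divisor of
`1 - α^W` with `r W = 0` is `r`-homogeneous. The characters killing `J_{i,j}` or `J_{i,j'}`
separate points of `ℤⁿ` (the coordinate `b = n - j'` vanishes on `J_{i,j}` and is `1` on
`J_{i,j'}`), so a common divisor is a monomial `c α^K`, and `c` is a unit because the constant
coefficient of `1 - α^J` is `1`.
-/

/-- The exponent vector `J_{i,j} ∈ ℤⁿ` of the one-dimensional summand
`ρ_{i,j} ≅ α_{n−j}·α_{n−i}^{−χ_{n−j}/χ_{n−i}}`: entry `1` in position `n − j`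
(coordinates are numbered `1,…,n`, so position `n − j` is the index `k` with
`k + 1 = n − j`), entry `−χ_{n−j}/χ_{n−i}` in position `n − i` when `i < n`
(if `i = n` then `n − i = 0` is not a position, so `J_{n,j}` is the standard
basis vector `e_{n−j}`), and all other entries `0`. -/
def Jvec (n : ℕ) (χ : Fin (n + 1) → ℕ) (i j : ℕ) : Fin n → ℤ :=
  fun k =>
    if (k : ℕ) + 1 = n - j then 1
    else if (k : ℕ) + 1 = n - i then
      -(((χ ⟨n - j, Nat.lt_succ_of_le (Nat.sub_le n j)⟩ : ℕ) /
          (χ ⟨n - i, Nat.lt_succ_of_le (Nat.sub_le n i)⟩ : ℕ) : ℕ) : ℤ)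
    else 0

namespace AddMonoidAlgebra

variable {R G : Type*}

section Semiring

variable [Semiring R] [AddCommMonoid G] (r : G →+ ℤ)

lemma apply_le_of_mem_support_mul {f g : R[G]} {m k : ℤ}
    (hf : ∀ x ∈ f.coeff.support, r x ≤ m) (hg : ∀ y ∈ g.coeff.support, r y ≤ k)
    {c : G} (hc : c ∈ (f * g).coeff.support) : r c ≤ m + k := by
  classical
  obtain ⟨x, hx, y, hy, rfl⟩ := Finset.mem_add.mp (support_coeff_mul_subset f g hc)
  rw [map_add]
  exact add_le_add (hf x hx) (hg y hy)

lemma apply_le_sub_one_of_mem_support_filter_ne {f : R[G]} {a x : G}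
    (hamax : ∀ x ∈ f.coeff.support, r x ≤ r a)
    (hx : x ∈ (f.coeff.filter fun x ↦ r x ≠ r a).support) : r x ≤ r a - 1 := by
  rw [Finsupp.support_filter, Finset.mem_filter] at hx
  exact Int.le_sub_one_of_lt (lt_of_le_of_ne (hamax x hx.1) hx.2)

lemma exists_mem_support_mul_apply_eq_add [NoZeroDivisors R] [UniqueSums G] {f g : R[G]}
    {a b : G} (ha : a ∈ f.coeff.support) (hamax : ∀ x ∈ f.coeff.support, r x ≤ r a)
    (hb : b ∈ g.coeff.support) (hbmax : ∀ y ∈ g.coeff.support, r y ≤ r b) :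
    ∃ c ∈ (f * g).coeff.support, r c = r a + r b := by
  classical
  -- Only the product of the top `r`-levels of `f` and `g` reaches level `r a + r b`.
  set ft := ofCoeff (f.coeff.filter fun x ↦ r x = r a)
  set fr := ofCoeff (f.coeff.filter fun x ↦ r x ≠ r a)
  set gt := ofCoeff (g.coeff.filter fun y ↦ r y = r b)
  set gr := ofCoeff (g.coeff.filter fun y ↦ r y ≠ r b)
  have hft : ft ≠ 0 := fun h ↦
    Finsupp.mem_support_iff.mp ha (by simpa [ft] using congrArg (fun p : R[G] ↦ p.coeff a) h)
  have hgt : gt ≠ 0 := fun h ↦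
    Finsupp.mem_support_iff.mp hb (by simpa [gt] using congrArg (fun p : R[G] ↦ p.coeff b) h)
  obtain ⟨c, hc⟩ := Finsupp.support_nonempty_iff.mpr (coeff_eq_zero.not.mpr (mul_ne_zero hft hgt))
  have hrc : r c = r a + r b := by
    obtain ⟨x, hx, y, hy, rfl⟩ := Finset.mem_add.mp (support_coeff_mul_subset ft gt hc)
    simp only [ft, gt, Finsupp.support_filter, Finset.mem_filter] at hx hy
    rw [map_add, hx.2, hy.2]
  have hsplit : f * g = ft * gt + (ft * gr + fr * g) := by
    have hf : ft + fr = f := coeff_injective (Finsupp.filter_add_filter_not _ _)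
    have hg : gt + gr = g := coeff_injective (Finsupp.filter_add_filter_not _ _)
    rw [← hf, add_mul]
    nth_rw 1 [← hg]
    rw [mul_add, add_assoc]
  have hcross : (ft * gr + fr * g).coeff c = 0 := by
    have hft_le : ∀ x ∈ ft.coeff.support, r x ≤ r a := fun x hx ↦ by
      simp only [ft, Finsupp.support_filter, Finset.mem_filter] at hx
      exact hx.2.le
    have h₁ : c ∉ (ft * gr).coeff.support := fun h ↦ by
      have := apply_le_of_mem_support_mul r hft_le
        (fun _ ↦ apply_le_sub_one_of_mem_support_filter_ne r hbmax) h
      omega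
    have h₂ : c ∉ (fr * g).coeff.support := fun h ↦ by
      have := apply_le_of_mem_support_mul r
        (fun _ ↦ apply_le_sub_one_of_mem_support_filter_ne r hamax) hbmax h
      omega
    rw [coeff_add, Finsupp.add_apply, Finsupp.notMem_support_iff.mp h₁,
      Finsupp.notMem_support_iff.mp h₂, add_zero]
  refine ⟨c, ?_, hrc⟩
  rw [Finsupp.mem_support_iff, hsplit, coeff_add, Finsupp.add_apply, hcross, add_zero]
  exact Finsupp.mem_support_iff.mp hc

lemma image_support_subsingleton_of_dvd [NoZeroDivisors R] [UniqueSums G] {d h : R[G]}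
    (hdh : d ∣ h) (hh : h ≠ 0) (hr : (r '' h.coeff.support).Subsingleton) :
    (r '' d.coeff.support).Subsingleton := by
  obtain ⟨e, rfl⟩ := hdh
  have hd : d.coeff.support.Nonempty :=
    Finsupp.support_nonempty_iff.mpr (coeff_eq_zero.not.mpr (left_ne_zero_of_mul hh))
  have he : e.coeff.support.Nonempty :=
    Finsupp.support_nonempty_iff.mpr (coeff_eq_zero.not.mpr (right_ne_zero_of_mul hh))
  obtain ⟨a₁, ha₁, hmax_d⟩ := Finset.exists_max_image _ r hd
  obtain ⟨a₀, ha₀, hmin_d⟩ := Finset.exists_min_image _ r hd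
  obtain ⟨b₁, hb₁, hmax_e⟩ := Finset.exists_max_image _ r he
  obtain ⟨b₀, hb₀, hmin_e⟩ := Finset.exists_min_image _ r he
  obtain ⟨c₁, hc₁, hrc₁⟩ := exists_mem_support_mul_apply_eq_add r ha₁ hmax_d hb₁ hmax_e
  obtain ⟨c₀, hc₀, hrc₀⟩ := exists_mem_support_mul_apply_eq_add (-r) ha₀
    (fun x hx ↦ neg_le_neg (hmin_d x hx)) hb₀ (fun y hy ↦ neg_le_neg (hmin_e y hy))
  have hc : r c₁ = r c₀ := hr ⟨c₁, hc₁, rfl⟩ ⟨c₀, hc₀, rfl⟩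
  simp only [AddMonoidHom.neg_apply] at hrc₀
  rintro _ ⟨x, hx, rfl⟩ _ ⟨y, hy, rfl⟩
  linarith [hmax_e b₀ hb₀, hmax_d x hx, hmin_d x hx, hmax_d y hy, hmin_d y hy]

end Semiring

section Ring

variable [CommRing R] [AddCommGroup G]

lemma eq_zero_or_eq_of_mem_support_one_sub_single {W x : G}
    (hx : x ∈ ((1 : R[G]) - single W 1).coeff.support) : x = 0 ∨ x = W := by
  by_contra! h
  apply Finsupp.mem_support_iff.mp hx
  simp [one_def, coeff_single, h.1.symm, h.2.symm]

lemma coeff_one_sub_single_zero {W : G} (hW : W ≠ 0) : ((1 : R[G]) - single W 1).coeff 0 = 1 := by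
  rw [coeff_sub, Finsupp.sub_apply, one_def, coeff_single, coeff_single, Finsupp.single_eq_same,
    Finsupp.single_eq_of_ne' hW, sub_zero]

lemma one_sub_single_ne_zero [Nontrivial R] {W : G} (hW : W ≠ 0) : (1 : R[G]) - single W 1 ≠ 0 :=
  fun h ↦ one_ne_zero (by simpa [h] using coeff_one_sub_single_zero (R := R) hW : (1 : R) = 0)

lemma image_support_subsingleton_of_dvd_one_sub_single [IsDomain R] [UniqueSums G]
    (r : G →+ ℤ) {d : R[G]} {W : G} (hW : W ≠ 0) (hrW : r W = 0) (hd : d ∣ 1 - single W 1) :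
    (r '' d.coeff.support).Subsingleton := by
  refine image_support_subsingleton_of_dvd r hd (one_sub_single_ne_zero hW) ?_
  refine (Set.subsingleton_singleton (a := 0)).anti ?_
  rintro _ ⟨x, hx, rfl⟩
  rcases eq_zero_or_eq_of_mem_support_one_sub_single hx with rfl | rfl
  · exact map_zero r
  · exact hrW

lemma isUnit_of_dvd_of_support_subsingleton {d h : R[G]} (hdh : d ∣ h)
    (hd : (d.coeff.support : Set G).Subsingleton) {a : G} (ha : IsUnit (h.coeff a)) :
    IsUnit d := by
  obtain ⟨K, c, rfl⟩ : ∃ K c, d = single K c := by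
    obtain ⟨K, hK⟩ : ∃ K, d.coeff.support ⊆ {K} := by
      rcases hd.eq_empty_or_singleton with h0 | ⟨K, hK⟩
      · exact ⟨0, Finset.coe_eq_empty.mp h0 ▸ Finset.empty_subset _⟩
      · exact ⟨K, by rw [← Finset.coe_subset, Finset.coe_singleton, hK]⟩
    exact ⟨K, d.coeff K,
      coeff_inj.mp ((Finsupp.support_subset_singleton.mp hK).trans (coeff_single _ _).symm)⟩
  obtain ⟨e, rfl⟩ := hdh
  rw [coeff_single_mul_apply] at ha
  obtain ⟨u, rfl⟩ := isUnit_of_mul_isUnit_left ha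
  exact IsUnit.of_mul_eq_one (single (-K) ↑u⁻¹) (by
    rw [single_mul_single, add_neg_cancel, Units.mul_inv, one_def])

end Ring

lemma support_subsingleton_of_dvd_one_sub_single {R ι : Type*} [CommRing R] [IsDomain R]
    {d : R[ι → ℤ]} {J J' : ι → ℤ} {b : ι} (hJ : J ≠ 0) (hJb : J b = 0) (hJ'b : J' b = 1)
    (hd : d ∣ 1 - single J 1) (hd' : d ∣ 1 - single J' 1) :
    (d.coeff.support : Set (ι → ℤ)).Subsingleton := by
  have hJ' : J' ≠ 0 := fun h ↦ by simp [h] at hJ'b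
  have hb := image_support_subsingleton_of_dvd_one_sub_single (Pi.evalAddMonoidHom _ b) hJ hJb hd
  intro x hx y hy
  funext c
  have hc := image_support_subsingleton_of_dvd_one_sub_single
    (Pi.evalAddMonoidHom _ c - J' c • Pi.evalAddMonoidHom _ b) hJ' (by simp [hJ'b]) hd'
  have hxyb : x b = y b := hb ⟨x, hx, rfl⟩ ⟨y, hy, rfl⟩
  have hxyc : x c - J' c * x b = y c - J' c * y b := hc ⟨x, hx, rfl⟩ ⟨y, hy, rfl⟩
  rw [hxyb] at hxyc
  linarith

end AddMonoidAlgebra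

open AddMonoidAlgebra

lemma Jvec_apply_of_add_one_eq {n : ℕ} {χ : Fin (n + 1) → ℕ} {i j : ℕ} {k : Fin n}
    (hk : (k : ℕ) + 1 = n - j) : Jvec n χ i j k = 1 :=
  if_pos hk

lemma Jvec_apply_of_ne {n : ℕ} {χ : Fin (n + 1) → ℕ} {i j : ℕ} {k : Fin n}
    (hj : (k : ℕ) + 1 ≠ n - j) (hi : (k : ℕ) + 1 ≠ n - i) : Jvec n χ i j k = 0 := by
  rw [Jvec, if_neg hj, if_neg hi]

lemma Jvec_ne_zero {n : ℕ} {χ : Fin (n + 1) → ℕ} {i j : ℕ} (hj : j < n) : Jvec n χ i j ≠ 0 :=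
  fun h ↦ one_ne_zero <|
    (Jvec_apply_of_add_one_eq (k := ⟨n - 1 - j, by omega⟩) (by simp only; omega)).symm.trans
      (congrFun h _)

theorem divisive_euler_classes_pairwise_relatively_prime_general
    (n : ℕ) (χ : Fin (n + 1) → ℕ)
    (i j j' : ℕ) (hin : i ≤ n) (hjj' : j < j') (hj'i : j' < i) :
    ∀ d : AddMonoidAlgebra ℤ (Fin n → ℤ),
      d ∣ (1 - AddMonoidAlgebra.single (Jvec n χ i j) 1) →
      d ∣ (1 - AddMonoidAlgebra.single (Jvec n χ i j') 1) → IsUnit d := by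
  intro d hd hd'
  have hJ : Jvec n χ i j ≠ 0 := Jvec_ne_zero (by omega)
  have hsupp := support_subsingleton_of_dvd_one_sub_single (b := ⟨n - 1 - j', by omega⟩) hJ
    (Jvec_apply_of_ne (by simp only; omega) (by simp only; omega))
    (Jvec_apply_of_add_one_eq (by simp only; omega)) hd hd'
  exact isUnit_of_dvd_of_support_subsingleton hd hsupp
    (by rw [coeff_one_sub_single_zero hJ]; exact isUnit_one)

/-- For a normalized divisive weight vector `χ` and `1 ≤ i ≤ n`, the K-theoretic
equivariant Euler classes `1 − α^{J_{i,j}}` and `1 − α^{J_{i,j'}}` (for `j < j' < i`)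
of the summands of the representation attached to the `2i`-cell of `ℙ(χ)` are
relatively prime in the Laurent polynomial ring `S^±_ℤ(α)`, realised as
`AddMonoidAlgebra ℤ (Fin n → ℤ)`, the monomial `α^J` being `AddMonoidAlgebra.single J 1`. -/
theorem divisive_euler_classes_pairwise_relatively_prime
    (n : ℕ) (χ : Fin (n + 1) → ℕ) (hpos : ∀ j, 0 < χ j)
    (hdiv : ∀ j : Fin n, χ j.castSucc ∣ χ j.succ)
    (hnorm : ∀ j : Fin (n + 1), Finset.gcd (Finset.univ.erase j) χ = 1)
    (i j j' : ℕ) (hi1 : 1 ≤ i) (hin : i ≤ n) (hjj' : j < j') (hj'i : j' < i) :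
    ∀ d : AddMonoidAlgebra ℤ (Fin n → ℤ),
      d ∣ (1 - AddMonoidAlgebra.single (Jvec n χ i j) 1) →
      d ∣ (1 - AddMonoidAlgebra.single (Jvec n χ i j') 1) → IsUnit d :=
  divisive_euler_classes_pairwise_relatively_prime_general n χ i j j' hin hjj' hj'i
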